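/- arXiv:math/0510264 — 3 statements merged into one kernel-verified Lean document; each statement's English description precedes it below -/
import Mathlib

section
/- Let f_1, f_2, f_3, f_4 : {0,1}^n → [-1,1]. Then |∑_{S⊆[n]} f̂_1(S)·f̂_2(S)·f̂_3(S)·f̂_4(S)| ≤ 4·max_{S⊆[n]} min{|f̂_1(S)|, |f̂_2(S)|, |f̂_3(S)|, |f̂_4(S)|}. -/
open Finset

/-- Expectation over the uniform distribution on `{0,1}^n`. -/
noncomputable def expec {n : ℕ} (f : (Fin n → ZMod 2) → ℝ) : ℝ :=
  (∑ x : Fin n → ZMod 2, f x) / 2 ^ n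

/-- Fourier coefficient `f̂(S) = E_x [f x · (-1)^{∑_{j∈S} x_j}]`. -/
noncomputable def walshCoeff {n : ℕ} (f : (Fin n → ZMod 2) → ℝ) (S : Finset (Fin n)) : ℝ :=
  expec (fun x => f x * (-1 : ℝ) ^ (∑ j ∈ S, (x j).val))

lemma zmod2_ne_val {a b : ZMod 2} (h : a ≠ b) : a.val + b.val = 1 := by
  revert a b; decide

lemma orth {n : ℕ} (x y : Fin n → ZMod 2) :
    ∑ S : Finset (Fin n),
        ((-1:ℝ) ^ (∑ j ∈ S, (x j).val) * (-1:ℝ) ^ (∑ j ∈ S, (y j).val))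
      = if x = y then (2:ℝ)^n else 0 := by
  have h1 : ∀ S : Finset (Fin n),
      (-1:ℝ) ^ (∑ j ∈ S, (x j).val) * (-1:ℝ) ^ (∑ j ∈ S, (y j).val)
      = ∏ j ∈ S, ((-1:ℝ) ^ ((x j).val + (y j).val)) := by
    intro S
    rw [← pow_add, ← Finset.sum_add_distrib, ← Finset.prod_pow_eq_pow_sum]
  simp_rw [h1]
  have h2 : ∑ S : Finset (Fin n), ∏ j ∈ S, ((-1:ℝ) ^ ((x j).val + (y j).val))
      = ∏ j : Fin n, ((-1:ℝ) ^ ((x j).val + (y j).val) + 1) := by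
    rw [Finset.prod_add]
    rw [← Finset.powerset_univ]
    exact (Finset.sum_congr rfl (fun t _ => by simp)).symm
  rw [h2]
  by_cases hxy : x = y
  · subst hxy
    simp only [if_true]
    have : ∀ j : Fin n, (-1:ℝ) ^ ((x j).val + (x j).val) + 1 = 2 := by
      intro j
      rw [Even.neg_one_pow ⟨(x j).val, rfl⟩]; norm_num
    rw [Finset.prod_congr rfl (fun j _ => this j)]
    simp [Finset.prod_const]
  · simp only [hxy, if_false]
    obtain ⟨j₀, hj₀⟩ : ∃ j, x j ≠ y j := by
      by_contra h; push_neg at h; exact hxy (funext h)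
    apply Finset.prod_eq_zero (Finset.mem_univ j₀)
    rw [zmod2_ne_val hj₀]; norm_num

lemma parseval_le {n : ℕ} (f : (Fin n → ZMod 2) → ℝ) (hf : ∀ x, |f x| ≤ 1) :
    ∑ S : Finset (Fin n), (walshCoeff f S)^2 ≤ 1 := by
  have h2n : (0:ℝ) < 2^n := by positivity
  have key : ∑ S : Finset (Fin n), (walshCoeff f S)^2
      = (∑ x : Fin n → ZMod 2, (f x)^2) / 2^n := by
    have expand : ∀ S : Finset (Fin n), (walshCoeff f S)^2
        = (∑ x : Fin n → ZMod 2, ∑ y : Fin n → ZMod 2,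
            f x * f y * ((-1:ℝ) ^ (∑ j ∈ S, (x j).val) * (-1:ℝ) ^ (∑ j ∈ S, (y j).val)))
          / (2^n * 2^n) := by
      intro S
      unfold walshCoeff expec
      rw [div_pow, sq, Finset.sum_mul_sum]
      congr 1
      · exact Finset.sum_congr rfl fun x _ => Finset.sum_congr rfl fun y _ => by ring
      · ring
    simp_rw [expand, ← Finset.sum_div]
    rw [Finset.sum_comm]
    have : ∀ x : Fin n → ZMod 2,
        ∑ S : Finset (Fin n), ∑ y : Fin n → ZMod 2,
            f x * f y * ((-1:ℝ) ^ (∑ j ∈ S, (x j).val) * (-1:ℝ) ^ (∑ j ∈ S, (y j).val))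
        = (f x)^2 * 2^n := by
      intro x
      rw [Finset.sum_comm]
      have : ∀ y : Fin n → ZMod 2,
          ∑ S : Finset (Fin n),
              f x * f y * ((-1:ℝ) ^ (∑ j ∈ S, (x j).val) * (-1:ℝ) ^ (∑ j ∈ S, (y j).val))
          = f x * f y * (if x = y then (2:ℝ)^n else 0) := by
        intro y
        rw [← Finset.mul_sum, orth]
      rw [Finset.sum_congr rfl fun y _ => this y]
      simp only [mul_ite, mul_zero]
      rw [Finset.sum_ite_eq]
      simp [sq]
    rw [Finset.sum_congr rfl fun x _ => this x]
    rw [← Finset.sum_mul, mul_div_mul_right _ _ (ne_of_gt h2n)]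
    
  rw [key, div_le_one h2n]
  calc ∑ x : Fin n → ZMod 2, (f x)^2 ≤ ∑ _x : Fin n → ZMod 2, (1:ℝ) := by
        apply Finset.sum_le_sum
        intro x _
        have := hf x
        nlinarith [abs_nonneg (f x), sq_abs (f x)]
    _ = 2^n := by simp [Finset.card_univ]

lemma coeff_abs_le {n : ℕ} (f : (Fin n → ZMod 2) → ℝ) (hf : ∀ x, |f x| ≤ 1)
    (S : Finset (Fin n)) : |walshCoeff f S| ≤ 1 := by
  unfold walshCoeff expec
  rw [abs_div, abs_of_pos (show (0:ℝ) < 2^n by positivity), div_le_one (by positivity)]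
  calc |∑ x : Fin n → ZMod 2, f x * (-1:ℝ) ^ (∑ j ∈ S, (x j).val)|
      ≤ ∑ x : Fin n → ZMod 2, |f x * (-1:ℝ) ^ (∑ j ∈ S, (x j).val)| :=
        Finset.abs_sum_le_sum_abs _ _
    _ ≤ ∑ _x : Fin n → ZMod 2, (1:ℝ) := by
        apply Finset.sum_le_sum
        intro x _
        rw [abs_mul, abs_pow, abs_neg, abs_one, one_pow, mul_one]
        exact hf x
    _ = 2^n := by simp [Finset.card_univ]

lemma prod_bound (a b c d : ℝ) (ha : |a| ≤ 1) (hb : |b| ≤ 1) (hc : |c| ≤ 1) (hd : |d| ≤ 1) :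
    |a*b*c*d| ≤ min (min |a| |b|) (min |c| |d|) * ((a^2+b^2+c^2+d^2)/2) := by
  have hA := abs_nonneg a; have hB := abs_nonneg b
  have hC := abs_nonneg c; have hD := abs_nonneg d
  rw [abs_mul, abs_mul, abs_mul, ← sq_abs a, ← sq_abs b, ← sq_abs c, ← sq_abs d]
  set A := |a|; set B := |b|; set C := |c|; set D := |d|
  rcases le_total (min A B) (min C D) with h | h
  · rw [min_eq_left h]
    rcases le_total A B with h2 | h2
    · rw [min_eq_left h2] at *
      have hAC : A ≤ C := le_trans h (min_le_left _ _)
      nlinarith [sq_nonneg (B - C), mul_nonneg hA hB, mul_nonneg hC hD,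
        mul_nonneg (mul_nonneg hA hB) hC]
    · rw [min_eq_right h2] at *
      have hBC : B ≤ C := le_trans h (min_le_left _ _)
      nlinarith [sq_nonneg (A - C), mul_nonneg hA hB, mul_nonneg hC hD,
        mul_nonneg (mul_nonneg hA hB) hC]
  · rw [min_eq_right h]
    rcases le_total C D with h2 | h2
    · rw [min_eq_left h2] at *
      have hCA : C ≤ A := le_trans h (min_le_left _ _)
      nlinarith [sq_nonneg (A - D), mul_nonneg hA hB, mul_nonneg hC hD,
        mul_nonneg (mul_nonneg hA hD) hC]
    · rw [min_eq_right h2] at *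
      have hDA : D ≤ A := le_trans h (min_le_left _ _)
      nlinarith [sq_nonneg (A - C), mul_nonneg hA hB, mul_nonneg hC hD,
        mul_nonneg (mul_nonneg hA hC) hD]

theorem four_functions_fourier_bound (n : ℕ)
    (f₁ f₂ f₃ f₄ : (Fin n → ZMod 2) → ℝ)
    (h₁ : ∀ x, f₁ x ∈ Set.Icc (-1 : ℝ) 1) (h₂ : ∀ x, f₂ x ∈ Set.Icc (-1 : ℝ) 1)
    (h₃ : ∀ x, f₃ x ∈ Set.Icc (-1 : ℝ) 1) (h₄ : ∀ x, f₄ x ∈ Set.Icc (-1 : ℝ) 1) :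
    |∑ S : Finset (Fin n), walshCoeff f₁ S * walshCoeff f₂ S * walshCoeff f₃ S * walshCoeff f₄ S|
      ≤ 4 * ⨆ S : Finset (Fin n),
          min (min |walshCoeff f₁ S| |walshCoeff f₂ S|) (min |walshCoeff f₃ S| |walshCoeff f₄ S|) := by
  have hf₁ : ∀ x, |f₁ x| ≤ 1 := fun x => abs_le.mpr ⟨(h₁ x).1, (h₁ x).2⟩
  have hf₂ : ∀ x, |f₂ x| ≤ 1 := fun x => abs_le.mpr ⟨(h₂ x).1, (h₂ x).2⟩
  have hf₃ : ∀ x, |f₃ x| ≤ 1 := fun x => abs_le.mpr ⟨(h₃ x).1, (h₃ x).2⟩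
  have hf₄ : ∀ x, |f₄ x| ≤ 1 := fun x => abs_le.mpr ⟨(h₄ x).1, (h₄ x).2⟩
  set g : Finset (Fin n) → ℝ := fun S =>
    min (min |walshCoeff f₁ S| |walshCoeff f₂ S|) (min |walshCoeff f₃ S| |walshCoeff f₄ S|)
    with hg
  set M : ℝ := ⨆ S : Finset (Fin n), g S with hM
  have hbdd : BddAbove (Set.range g) := (Set.finite_range g).bddAbove
  have hle : ∀ S, g S ≤ M := fun S => le_ciSup hbdd S
  have hg0 : ∀ S, 0 ≤ g S := fun S => le_min (le_min (abs_nonneg _) (abs_nonneg _))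
    (le_min (abs_nonneg _) (abs_nonneg _))
  have hM0 : 0 ≤ M := le_trans (hg0 ∅) (hle ∅)
  set K : Finset (Fin n) → ℝ := fun S =>
    (walshCoeff f₁ S)^2 + (walshCoeff f₂ S)^2 + (walshCoeff f₃ S)^2 + (walshCoeff f₄ S)^2
    with hK
  have hK0 : ∀ S, 0 ≤ K S := fun S => by positivity
  calc |∑ S : Finset (Fin n),
          walshCoeff f₁ S * walshCoeff f₂ S * walshCoeff f₃ S * walshCoeff f₄ S|
      ≤ ∑ S : Finset (Fin n),
          |walshCoeff f₁ S * walshCoeff f₂ S * walshCoeff f₃ S * walshCoeff f₄ S| :=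
        Finset.abs_sum_le_sum_abs _ _
    _ ≤ ∑ S : Finset (Fin n), M * (K S / 2) := by
        apply Finset.sum_le_sum
        intro S _
        calc |walshCoeff f₁ S * walshCoeff f₂ S * walshCoeff f₃ S * walshCoeff f₄ S|
            ≤ g S * (K S / 2) :=
              prod_bound _ _ _ _ (coeff_abs_le f₁ hf₁ S) (coeff_abs_le f₂ hf₂ S)
                (coeff_abs_le f₃ hf₃ S) (coeff_abs_le f₄ hf₄ S)
          _ ≤ M * (K S / 2) :=
              mul_le_mul_of_nonneg_right (hle S) (by positivity)
    _ = M * ((∑ S : Finset (Fin n), K S) / 2) := by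
        rw [← Finset.mul_sum, ← Finset.sum_div]
    _ ≤ M * 2 := by
        apply mul_le_mul_of_nonneg_left _ hM0
        rw [div_le_iff₀ (by norm_num)]
        have : ∑ S : Finset (Fin n), K S
            = (∑ S : Finset (Fin n), (walshCoeff f₁ S)^2)
              + (∑ S : Finset (Fin n), (walshCoeff f₂ S)^2)
              + (∑ S : Finset (Fin n), (walshCoeff f₃ S)^2)
              + (∑ S : Finset (Fin n), (walshCoeff f₄ S)^2) := by
          simp [hK, Finset.sum_add_distrib]
        rw [this]
        have p1 := parseval_le f₁ hf₁
        have p2 := parseval_le f₂ hf₂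
        have p3 := parseval_le f₃ hf₃
        have p4 := parseval_le f₄ hf₄
        linarith
    _ ≤ 4 * M := by linarith
end

section
/- Let f : {0,1}^n → [-1,1] be a bounded function and d ≥ 1 an integer. Then U^d(f) ≤ U^1(f) + 4^d · max_i Inf_i(f), where Inf_i(f) = (1/4)·E_x[(f(x)−f(x+e_i))²]. -/
open Finset

/-- Dimension-`d` Gowers uniformity of `f : {0,1}^n → ℝ`. -/
noncomputable def gowersU {n : ℕ} (d : ℕ) (f : (Fin n → ZMod 2) → ℝ) : ℝ :=
  (∑ x : Fin n → ZMod 2, ∑ y : Fin d → Fin n → ZMod 2,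
      ∏ S : Finset (Fin d), f (x + ∑ i ∈ S, y i)) / (2 ^ n * (2 ^ n : ℝ) ^ d)

/-- Influence of coordinate `i` for a real-valued function on `{0,1}^n`. -/
noncomputable def influence {n : ℕ} (i : Fin n) (g : (Fin n → ZMod 2) → ℝ) : ℝ :=
  (1 / 4) * expec (fun x => (g x - g (x + Pi.single i 1)) ^ 2)

section Aux

variable {n : ℕ}

local notation "G" => Fin n → ZMod 2

/-! ### expectation plumbing -/

lemma card_G : (Fintype.card G : ℝ) = 2 ^ n := by
  simp [Fintype.card_fun]

lemma two_pow_pos : (0:ℝ) < 2 ^ n := by positivity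

lemma sum_shift (h : G → ℝ) (t : G) : ∑ x : G, h (x + t) = ∑ x : G, h x :=
  Fintype.sum_equiv (Equiv.addRight t) _ _ (fun _ => rfl)

lemma expec_shift (h : G → ℝ) (t : G) : expec (fun x => h (x + t)) = expec h := by
  unfold expec; rw [sum_shift]

lemma expec_nonneg {h : G → ℝ} (hh : ∀ x, 0 ≤ h x) : 0 ≤ expec h := by
  unfold expec
  exact div_nonneg (Finset.sum_nonneg fun x _ => hh x) (le_of_lt two_pow_pos)

lemma expec_mono {h g : G → ℝ} (hh : ∀ x, h x ≤ g x) : expec h ≤ expec g := by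
  unfold expec
  have := two_pow_pos (n := n)
  gcongr with x
  exact hh x

lemma expec_add (h g : G → ℝ) : expec (fun x => h x + g x) = expec h + expec g := by
  unfold expec; rw [Finset.sum_add_distrib, add_div]

lemma expec_const (c : ℝ) : expec (fun _ : G => c) = c := by
  unfold expec
  rw [Finset.sum_const, card_univ, nsmul_eq_mul]
  rw [show ((Fintype.card G : ℝ)) = 2 ^ n from card_G]
  field_simp

lemma expec_const_mul (c : ℝ) (h : G → ℝ) :
    expec (fun x => c * h x) = c * expec h := by
  unfold expec; rw [← Finset.mul_sum, mul_div_assoc]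

lemma abs_expec_le {h : G → ℝ} (hb : ∀ x, |h x| ≤ 1) : |expec h| ≤ 1 := by
  unfold expec
  rw [abs_div, abs_of_pos two_pow_pos, div_le_one two_pow_pos]
  calc |∑ x : G, h x| ≤ ∑ x : G, |h x| := Finset.abs_sum_le_sum_abs _ _
    _ ≤ ∑ _x : G, (1:ℝ) := Finset.sum_le_sum fun x _ => hb x
    _ = 2 ^ n := by
        rw [Finset.sum_const, card_univ, nsmul_eq_mul, mul_one, card_G]

/-! ### characters -/

noncomputable def sgn (b : ZMod 2) : ℝ := if b = 0 then 1 else -1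

lemma zmod2_cases (a : ZMod 2) : a = 0 ∨ a = 1 := by revert a; decide

lemma zmod2_add_self (a : ZMod 2) : a + a = 0 := by revert a; decide

lemma G_add_self (x : G) : x + x = 0 := by ext j; simp [zmod2_add_self]

lemma sgn_zero : sgn 0 = 1 := if_pos rfl

lemma sgn_one : sgn 1 = -1 := if_neg (by decide)

lemma sgn_add (a b : ZMod 2) : sgn (a + b) = sgn a * sgn b := by
  rcases zmod2_cases a with rfl | rfl <;> rcases zmod2_cases b with rfl | rfl <;>
    simp [sgn_zero, sgn_one, show (1 + 1 : ZMod 2) = 0 by decide]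

lemma sgn_sq (a : ZMod 2) : sgn a * sgn a = 1 := by
  rcases zmod2_cases a with rfl | rfl <;> simp [sgn_zero, sgn_one]

noncomputable def chi (S : Finset (Fin n)) (x : G) : ℝ := ∏ i ∈ S, sgn (x i)

lemma chi_add (S : Finset (Fin n)) (x y : G) : chi S (x + y) = chi S x * chi S y := by
  unfold chi
  rw [← Finset.prod_mul_distrib]
  exact Finset.prod_congr rfl fun i _ => sgn_add _ _

lemma chi_mul_self (S : Finset (Fin n)) (x : G) : chi S x * chi S x = 1 := by
  unfold chi
  rw [← Finset.prod_mul_distrib]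
  exact Finset.prod_eq_one fun i _ => sgn_sq _

lemma chi_empty (x : G) : chi ∅ x = 1 := Finset.prod_empty

lemma chi_zero (S : Finset (Fin n)) : chi S 0 = 1 :=
  Finset.prod_eq_one fun i _ => sgn_zero

lemma chi_single {S : Finset (Fin n)} {i : Fin n} (hi : i ∈ S) :
    chi S (Pi.single i 1) = -1 := by
  unfold chi
  rw [Finset.prod_eq_single_of_mem i hi (fun j _ hj => by
    rw [Pi.single_eq_of_ne hj, sgn_zero])]
  rw [Pi.single_eq_same, sgn_one]

lemma sum_chi {S : Finset (Fin n)} (hS : S ≠ ∅) : ∑ x : G, chi S x = 0 := by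
  obtain ⟨i, hi⟩ := Finset.nonempty_of_ne_empty hS
  have key : ∀ x : G, chi S x + chi S (x + Pi.single i 1) = 0 := fun x => by
    rw [chi_add, chi_single hi]; ring
  have h2 : (∑ x : G, chi S x) + (∑ x : G, chi S x) = 0 := by
    nth_rewrite 2 [← sum_shift (chi S) (Pi.single i 1)]
    rw [← Finset.sum_add_distrib]
    exact Finset.sum_eq_zero fun x _ => key x
  linarith

lemma chi_insert {S : Finset (Fin n)} {i : Fin n} (hi : i ∉ S) (x : G) :
    chi (insert i S) x = sgn (x i) * chi S x := Finset.prod_insert hi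

lemma sum_chi_S {x : G} (hx : x ≠ 0) : ∑ S : Finset (Fin n), chi S x = 0 := by
  classical
  obtain ⟨i, hi⟩ : ∃ i, x i ≠ 0 := by
    by_contra h
    push_neg at h
    exact hx (funext h)
  have hsgn : sgn (x i) = -1 := if_neg hi
  apply Finset.sum_ninvolution (fun S => if i ∈ S then S.erase i else insert i S)
  · intro S
    by_cases hiS : i ∈ S
    · simp only [if_pos hiS]
      have : chi S x = sgn (x i) * chi (S.erase i) x := by
        conv_lhs => rw [← Finset.insert_erase hiS]
        exact chi_insert (Finset.notMem_erase i S) x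
      rw [this, hsgn]; ring
    · simp only [if_neg hiS]
      rw [chi_insert hiS, hsgn]; ring
  · intro S _
    by_cases hiS : i ∈ S
    · simp only [if_pos hiS]
      intro h
      exact (h ▸ Finset.notMem_erase i S) hiS
    · simp only [if_neg hiS]
      intro h
      exact hiS (h ▸ Finset.mem_insert_self i S)
  · intro S
    exact Finset.mem_univ _
  · intro S
    by_cases hiS : i ∈ S
    · simp [hiS, Finset.insert_erase hiS, Finset.notMem_erase]
    · simp [hiS, Finset.erase_insert hiS]

lemma card_finsets : (Fintype.card (Finset (Fin n)) : ℝ) = 2 ^ n := by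
  simp [Fintype.card_finset]

lemma sum_chi_mul (x z : G) :
    ∑ S : Finset (Fin n), chi S x * chi S z = if x = z then (2:ℝ)^n else 0 := by
  have h : ∀ S : Finset (Fin n), chi S x * chi S z = chi S (x + z) := fun S =>
    (chi_add S x z).symm
  simp_rw [h]
  by_cases hxz : x = z
  · subst hxz
    rw [G_add_self, if_pos rfl]
    simp_rw [chi_zero]
    rw [Finset.sum_const, card_univ, nsmul_eq_mul, mul_one, card_finsets]
  · rw [if_neg hxz]
    apply sum_chi_S
    intro h0
    apply hxz
    have : x + z + z = z := by rw [h0]; exact zero_add z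
    rwa [add_assoc, G_add_self, add_zero] at this

/-! ### Fourier coefficients -/

noncomputable def coeff (f : G → ℝ) (S : Finset (Fin n)) : ℝ :=
  expec (fun x => f x * chi S x)

lemma coeff_empty (f : G → ℝ) : coeff f ∅ = expec f := by
  unfold coeff
  simp [chi_empty]

lemma parseval (f : G → ℝ) :
    ∑ S : Finset (Fin n), coeff f S ^ 2 = expec (fun x => f x ^ 2) := by
  have key : ∑ S : Finset (Fin n), (∑ x : G, f x * chi S x) ^ 2
      = 2 ^ n * ∑ x : G, f x ^ 2 := by
    have e1 : ∀ S : Finset (Fin n), (∑ x : G, f x * chi S x) ^ 2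
        = ∑ x : G, ∑ z : G, f x * f z * (chi S x * chi S z) := by
      intro S
      rw [sq, Finset.sum_mul_sum]
      exact Finset.sum_congr rfl fun x _ => Finset.sum_congr rfl fun z _ => by ring
    calc ∑ S : Finset (Fin n), (∑ x : G, f x * chi S x) ^ 2
        = ∑ S : Finset (Fin n), ∑ x : G, ∑ z : G, f x * f z * (chi S x * chi S z) :=
          Finset.sum_congr rfl fun S _ => e1 S
      _ = ∑ x : G, ∑ z : G, ∑ S : Finset (Fin n), f x * f z * (chi S x * chi S z) := by
          rw [Finset.sum_comm]
          exact Finset.sum_congr rfl fun x _ => Finset.sum_comm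
      _ = ∑ x : G, ∑ z : G, f x * f z * (if x = z then (2:ℝ)^n else 0) := by
          refine Finset.sum_congr rfl fun x _ => Finset.sum_congr rfl fun z _ => ?_
          rw [← Finset.mul_sum, sum_chi_mul]
      _ = ∑ x : G, f x * f x * 2 ^ n := by
          refine Finset.sum_congr rfl fun x _ => ?_
          simp [mul_ite, Finset.sum_ite_eq]
      _ = 2 ^ n * ∑ x : G, f x ^ 2 := by
          rw [Finset.mul_sum]
          exact Finset.sum_congr rfl fun x _ => by ring
  unfold coeff expec
  simp_rw [div_pow, ← Finset.sum_div, key]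
  have h2 : ((2:ℝ)^n) ≠ 0 := ne_of_gt two_pow_pos
  field_simp

lemma coeff_sq_le_expec_sq (g : G → ℝ) (S : Finset (Fin n)) :
    (expec (fun x => g x * chi S x)) ^ 2 ≤ expec (fun x => g x ^ 2) := by
  have cs := Finset.sum_mul_sq_le_sq_mul_sq Finset.univ g (chi S)
  have hchi : ∑ x : G, chi S x ^ 2 = 2 ^ n := by
    have : ∀ x : G, chi S x ^ 2 = 1 := fun x => by rw [sq]; exact chi_mul_self S x
    simp_rw [this]
    rw [Finset.sum_const, card_univ, nsmul_eq_mul, mul_one, card_G]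
  rw [hchi] at cs
  unfold expec
  rw [div_pow, div_le_div_iff₀ (by positivity) two_pow_pos]
  calc (∑ x : G, g x * chi S x) ^ 2 * 2 ^ n ≤ ((∑ x : G, g x ^ 2) * 2 ^ n) * 2 ^ n := by
        have h := mul_le_mul_of_nonneg_right cs (le_of_lt (two_pow_pos (n := n)))
        exact h
    _ = (∑ x : G, g x ^ 2) * ((2:ℝ)^n)^2 := by ring

lemma coeff_sq_le_influence (f : G → ℝ) {S : Finset (Fin n)} {i : Fin n}
    (hi : i ∈ S) : coeff f S ^ 2 ≤ influence i f := by
  set e : G := Pi.single i 1 with he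
  have hchie : chi S e = -1 := chi_single hi
  have h1 : expec (fun x => (f x - f (x + e)) * chi S x) = 2 * coeff f S := by
    have hpt : ∀ x : G, (f x - f (x + e)) * chi S x
        = f x * chi S x + f (x + e) * chi S (x + e) := by
      intro x
      rw [chi_add, hchie]
      ring
    calc expec (fun x => (f x - f (x + e)) * chi S x)
        = expec (fun x => f x * chi S x + f (x + e) * chi S (x + e)) := by
          exact congrArg expec (funext hpt)
      _ = expec (fun x => f x * chi S x) + expec (fun x => f (x + e) * chi S (x + e)) :=
          expec_add _ _
      _ = coeff f S + coeff f S := by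
          rw [expec_shift (fun z => f z * chi S z) e]; rfl
      _ = 2 * coeff f S := by ring
  have h2 := coeff_sq_le_expec_sq (fun x => f x - f (x + e)) S
  rw [h1] at h2
  unfold influence
  rw [← he]
  nlinarith [h2]

lemma coeff_conv (f : G → ℝ) (S : Finset (Fin n)) :
    coeff (fun y => expec (fun x => f x * f (x + y))) S = coeff f S ^ 2 := by
  unfold coeff expec
  have hpt : ∀ y : G, (∑ x : G, f x * f (x + y)) / 2 ^ n * chi S y
      = (∑ x : G, (f x * chi S x) * (f (x + y) * chi S (x + y))) / 2 ^ n := by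
    intro y
    rw [div_mul_eq_mul_div, Finset.sum_mul]
    congr 1
    refine Finset.sum_congr rfl fun x _ => ?_
    have : chi S x * chi S (x + y) = chi S y := by
      rw [chi_add, ← mul_assoc, chi_mul_self, one_mul]
    calc f x * f (x + y) * chi S y = f x * f (x + y) * (chi S x * chi S (x + y)) := by
          rw [this]
      _ = f x * chi S x * (f (x + y) * chi S (x + y)) := by ring
  simp_rw [hpt]
  rw [← Finset.sum_div, div_div]
  have hswap : ∑ y : G, ∑ x : G, (f x * chi S x) * (f (x + y) * chi S (x + y))
      = (∑ x : G, f x * chi S x) ^ 2 := by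
    rw [Finset.sum_comm]
    have : ∀ x : G, ∑ y : G, (f x * chi S x) * (f (x + y) * chi S (x + y))
        = (f x * chi S x) * ∑ z : G, f z * chi S z := by
      intro x
      rw [← Finset.mul_sum]
      congr 1
      have := sum_shift (fun z => f z * chi S z) x
      calc ∑ y : G, f (x + y) * chi S (x + y)
          = ∑ y : G, f (y + x) * chi S (y + x) := by
            exact Finset.sum_congr rfl fun y _ => by rw [add_comm]
        _ = ∑ z : G, f z * chi S z := this
    simp_rw [this]
    rw [← Finset.sum_mul, sq]
  rw [hswap, div_pow]
  congr 1
  ring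

/-! ### the base case inequality -/

lemma influence_nonneg (i : Fin n) (g : G → ℝ) : 0 ≤ influence i g := by
  unfold influence
  have := expec_nonneg (fun x : G => sq_nonneg (g x - g (x + Pi.single i 1)))
  linarith

lemma base_ineq (hn : 0 < n) (f : G → ℝ) (hbd : ∀ x, |f x| ≤ 1) :
    expec (fun y => (expec fun x => f x * f (x + y)) ^ 2)
      ≤ (expec f) ^ 2 + ⨆ i : Fin n, influence i f := by
  set M := ⨆ i : Fin n, influence i f with hM
  have hbdd : BddAbove (Set.range fun i : Fin n => influence i f) :=
    (Set.finite_range _).bddAbove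
  have hle : ∀ i, influence i f ≤ M := fun i => le_ciSup hbdd i
  have hMnn : 0 ≤ M := by
    obtain ⟨i⟩ := Fin.pos_iff_nonempty.mp hn
    exact le_trans (influence_nonneg i f) (hle i)
  have hp : expec (fun y => (expec fun x => f x * f (x + y)) ^ 2)
      = ∑ S : Finset (Fin n), coeff f S ^ 4 := by
    rw [← parseval (fun y => expec fun x => f x * f (x + y))]
    refine Finset.sum_congr rfl fun S _ => ?_
    rw [coeff_conv]
    ring
  rw [hp, ← Finset.add_sum_erase _ _ (Finset.mem_univ (∅ : Finset (Fin n)))]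
  have h1 : coeff f ∅ ^ 4 ≤ (expec f) ^ 2 := by
    have h := abs_expec_le hbd
    rw [coeff_empty]
    have h2 : (expec f) ^ 2 ≤ 1 := by
      rw [← sq_abs]
      nlinarith [abs_nonneg (expec f)]
    nlinarith [sq_nonneg (expec f)]
  have hterm : ∀ S ∈ Finset.univ.erase (∅ : Finset (Fin n)),
      coeff f S ^ 4 ≤ M * coeff f S ^ 2 := by
    intro S hS
    obtain ⟨i, hi⟩ := Finset.nonempty_of_ne_empty (Finset.mem_erase.mp hS).1
    have h3 : coeff f S ^ 2 ≤ M := le_trans (coeff_sq_le_influence f hi) (hle i)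
    nlinarith [sq_nonneg (coeff f S)]
  have h2 : ∑ S ∈ Finset.univ.erase (∅ : Finset (Fin n)), coeff f S ^ 4 ≤ M := by
    calc ∑ S ∈ Finset.univ.erase (∅ : Finset (Fin n)), coeff f S ^ 4
        ≤ ∑ S ∈ Finset.univ.erase (∅ : Finset (Fin n)), M * coeff f S ^ 2 :=
          Finset.sum_le_sum hterm
      _ = M * ∑ S ∈ Finset.univ.erase (∅ : Finset (Fin n)), coeff f S ^ 2 :=
          (Finset.mul_sum _ _ _).symm
      _ ≤ M * ∑ S : Finset (Fin n), coeff f S ^ 2 := by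
          refine mul_le_mul_of_nonneg_left ?_ hMnn
          exact Finset.sum_le_sum_of_subset_of_nonneg (Finset.erase_subset _ _)
            (fun S _ _ => sq_nonneg _)
      _ ≤ M * 1 := by
          refine mul_le_mul_of_nonneg_left ?_ hMnn
          rw [parseval]
          calc expec (fun x : G => f x ^ 2)
              ≤ expec (fun _ : G => (1:ℝ)) := expec_mono (fun x => by
                have := abs_le.mp (hbd x); nlinarith)
            _ = 1 := expec_const 1
      _ = M := mul_one M
  linarith

/-! ### recursion structure -/

lemma insertNone_eq {κ : Type*} [DecidableEq κ] (T : Finset κ) :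
    Finset.insertNone T = insert none (T.map Function.Embedding.some) := by
  ext o
  cases o <;> simp

lemma prod_finset_option {κ : Type*} [Fintype κ] [DecidableEq κ] (F : Finset (Option κ) → ℝ) :
    ∏ S : Finset (Option κ), F S
      = ∏ T : Finset κ, (F (T.map Function.Embedding.some) * F (Finset.insertNone T)) := by
  classical
  let E : Finset κ × Bool ≃ Finset (Option κ) :=
    { toFun := fun p => if p.2 then Finset.insertNone p.1 else p.1.map Function.Embedding.some
      invFun := fun S => (S.eraseNone, none ∈ S)
      left_inv := by
        rintro ⟨T, b⟩
        cases b <;> simp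
      right_inv := by
        intro S
        by_cases hS : none ∈ S
        · simp only [hS]
          simp [Finset.insertNone_eraseNone, Finset.insert_eq_self.mpr hS]
        · simp only [hS]
          simp [Finset.map_some_eraseNone, Finset.erase_eq_of_notMem hS] }
  calc ∏ S : Finset (Option κ), F S
      = ∏ p : Finset κ × Bool, F (E p) :=
        (Fintype.prod_equiv E _ _ fun p => rfl).symm
    _ = ∏ T : Finset κ, ∏ b : Bool, F (E (T, b)) := Fintype.prod_prod_type _
    _ = ∏ T : Finset κ, (F (T.map Function.Embedding.some) * F (Finset.insertNone T)) := by
        refine Finset.prod_congr rfl fun T _ => ?_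
        rw [Fintype.prod_bool]
        show F (Finset.insertNone T) * F (T.map Function.Embedding.some) = _
        ring

/-- Unnormalized Gowers sum over an arbitrary index type. -/
noncomputable def numer {n : ℕ} (ι : Type*) [Fintype ι] [DecidableEq ι] (f : (Fin n → ZMod 2) → ℝ) : ℝ :=
  ∑ x : Fin n → ZMod 2, ∑ y : ι → Fin n → ZMod 2, ∏ S : Finset ι, f (x + ∑ i ∈ S, y i)

lemma numer_equiv {ι κ : Type*} [Fintype ι] [Fintype κ] [DecidableEq ι] [DecidableEq κ] (e : ι ≃ κ) (f : G → ℝ) :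
    numer (n := n) κ f = numer (n := n) ι f := by
  unfold numer
  refine Finset.sum_congr rfl fun x _ => ?_
  refine Fintype.sum_equiv (Equiv.arrowCongr e.symm (Equiv.refl G)) _ _ fun y => ?_
  refine Fintype.prod_equiv (Equiv.finsetCongr e.symm) _ _ fun S => ?_
  congr 2
  rw [Equiv.finsetCongr_apply, Finset.sum_map]
  refine Finset.sum_congr rfl fun j _ => ?_
  simp

lemma numer_option {κ : Type*} [Fintype κ] [DecidableEq κ] (f : G → ℝ) :
    numer (n := n) (Option κ) f
      = ∑ t : G, numer (n := n) κ (fun x => f x * f (x + t)) := by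
  have key : ∀ (x t : G) (y : κ → G),
      ∏ S : Finset (Option κ), f (x + ∑ i ∈ S, Option.elim i t y)
        = ∏ T : Finset κ, (f (x + ∑ i ∈ T, y i) * f (x + ∑ i ∈ T, y i + t)) := by
    intro x t y
    rw [prod_finset_option (fun S => f (x + ∑ i ∈ S, Option.elim i t y))]
    refine Finset.prod_congr rfl fun T _ => ?_
    have h1 : ∑ i ∈ T.map Function.Embedding.some, Option.elim i t y = ∑ i ∈ T, y i := by
      rw [Finset.sum_map]; rfl
    have h2 : ∑ i ∈ Finset.insertNone T, Option.elim i t y = t + ∑ i ∈ T, y i := by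
      rw [insertNone_eq, Finset.sum_insert (by simp), Finset.sum_map]; rfl
    rw [h1, h2, add_comm t (∑ i ∈ T, y i), ← add_assoc]
  unfold numer
  have main : ∀ x : G, ∑ Y : Option κ → G, ∏ S : Finset (Option κ), f (x + ∑ i ∈ S, Y i)
      = ∑ t : G, ∑ y : κ → G,
          ∏ T : Finset κ, (f (x + ∑ i ∈ T, y i) * f (x + ∑ i ∈ T, y i + t)) := by
    intro x
    calc ∑ Y : Option κ → G, ∏ S : Finset (Option κ), f (x + ∑ i ∈ S, Y i)
        = ∑ p : G × (κ → G), ∏ S : Finset (Option κ),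
            f (x + ∑ i ∈ S, Option.elim i p.1 p.2) := by
          refine Fintype.sum_equiv (Equiv.piOptionEquivProd (β := fun _ : Option κ => G))
            _ _ fun Y => ?_
          have hY : (fun i : Option κ => Option.elim i (Y none) fun a => Y (some a)) = Y :=
            funext fun o => by cases o <;> rfl
          show ∏ S : Finset (Option κ), f (x + ∑ i ∈ S, Y i)
              = ∏ S : Finset (Option κ), f (x + ∑ i ∈ S, Option.elim i (Y none) fun a => Y (some a))
          rw [hY]
      _ = ∑ t : G, ∑ y : κ → G, ∏ S : Finset (Option κ),
            f (x + ∑ i ∈ S, Option.elim i t y) := by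
          rw [Fintype.sum_prod_type]
      _ = _ := Finset.sum_congr rfl fun t _ => Finset.sum_congr rfl fun y _ => key x t y
  simp_rw [main]
  exact Finset.sum_comm

/-! ### gowersU recursion -/

lemma gowersU_succ (d : ℕ) (f : G → ℝ) :
    gowersU (d + 1) f = expec (fun t => gowersU d (fun x => f x * f (x + t))) := by
  have h1 : gowersU (d + 1) f
      = numer (n := n) (Fin (d + 1)) f / (2 ^ n * (2 ^ n : ℝ) ^ (d + 1)) := rfl
  have h2 : ∀ t : G, gowersU d (fun x => f x * f (x + t))
      = numer (n := n) (Fin d) (fun x => f x * f (x + t)) / (2 ^ n * (2 ^ n : ℝ) ^ d) :=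
    fun _ => rfl
  rw [h1, ← numer_equiv (finSuccEquiv d) f, numer_option]
  unfold expec
  simp_rw [h2]
  rw [← Finset.sum_div, div_div]
  congr 1
  ring

lemma gowersU_zero (f : G → ℝ) : gowersU 0 f = expec f := by
  unfold gowersU expec
  have key : ∀ x : G, ∑ y : Fin 0 → G, ∏ S : Finset (Fin 0), f (x + ∑ i ∈ S, y i) = f x := by
    intro x
    have hS : ∀ (y : Fin 0 → G) (S : Finset (Fin 0)), f (x + ∑ i ∈ S, y i) = f x := by
      intro y S
      rw [Finset.eq_empty_of_isEmpty S, Finset.sum_empty, add_zero]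
    calc ∑ y : Fin 0 → G, ∏ S : Finset (Fin 0), f (x + ∑ i ∈ S, y i)
        = ∑ _y : Fin 0 → G, ∏ _S : Finset (Fin 0), f x :=
          Finset.sum_congr rfl fun y _ => Finset.prod_congr rfl fun S _ => hS y S
      _ = f x := by
          rw [Finset.prod_const, Finset.sum_const]
          simp [Finset.card_univ]
  simp_rw [key]
  norm_num

lemma expec_expec_mul (f : G → ℝ) :
    expec (fun t => expec fun x => f x * f (x + t)) = (expec f) ^ 2 := by
  have key : ∑ t : G, ∑ x : G, f x * f (x + t) = (∑ x : G, f x) ^ 2 := by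
    rw [Finset.sum_comm]
    have h : ∀ x : G, ∑ t : G, f x * f (x + t) = f x * ∑ z : G, f z := by
      intro x
      rw [← Finset.mul_sum]
      congr 1
      calc ∑ t : G, f (x + t) = ∑ t : G, f (t + x) :=
            Finset.sum_congr rfl fun t _ => by rw [add_comm]
        _ = ∑ z : G, f z := sum_shift f x
    simp_rw [h]
    rw [← Finset.sum_mul, sq]
  unfold expec
  rw [← Finset.sum_div, div_div, key, div_pow]
  congr 1
  ring

lemma gowersU_one (f : G → ℝ) : gowersU 1 f = (expec f) ^ 2 := by
  rw [show (1 : ℕ) = 0 + 1 from rfl, gowersU_succ]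
  calc expec (fun t => gowersU 0 fun x => f x * f (x + t))
      = expec (fun t => expec fun x => f x * f (x + t)) := by
        refine congrArg expec (funext fun t => ?_)
        rw [gowersU_zero]
    _ = (expec f) ^ 2 := expec_expec_mul f

/-! ### influence of products -/

lemma influence_mul_le (f : G → ℝ) (hbd : ∀ x, |f x| ≤ 1) (t : G) (i : Fin n) :
    influence i (fun x => f x * f (x + t)) ≤ 4 * influence i f := by
  set e : G := Pi.single i 1 with he
  have key : ∀ a b a' b' : ℝ, |a| ≤ 1 → |b'| ≤ 1 →
      (a * b - a' * b') ^ 2 ≤ 2 * (a - a') ^ 2 + 2 * (b - b') ^ 2 := by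
    intro a b a' b' ha hb'
    have h1 : a ^ 2 ≤ 1 := by rw [← sq_abs]; nlinarith [abs_nonneg a]
    have h2 : b' ^ 2 ≤ 1 := by rw [← sq_abs]; nlinarith [abs_nonneg b']
    nlinarith [sq_nonneg (a * (b - b') - b' * (a - a')), sq_nonneg (b - b'), sq_nonneg (a - a'),
      mul_le_mul_of_nonneg_right h1 (sq_nonneg (b - b')),
      mul_le_mul_of_nonneg_right h2 (sq_nonneg (a - a'))]
  have hpt : ∀ x : G, ((fun x => f x * f (x + t)) x - (fun x => f x * f (x + t)) (x + e)) ^ 2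
      ≤ 2 * (f x - f (x + e)) ^ 2 + 2 * (f (x + t) - f ((x + t) + e)) ^ 2 := by
    intro x
    have harg : (x + e) + t = (x + t) + e := by rw [add_right_comm]
    simp only []
    rw [harg]
    exact key (f x) (f (x + t)) (f (x + e)) (f ((x + t) + e)) (hbd x) (hbd _)
  have h1 := expec_mono hpt
  have h2 : expec (fun x => 2 * (f x - f (x + e)) ^ 2 + 2 * (f (x + t) - f ((x + t) + e)) ^ 2)
      = 4 * expec (fun x => (f x - f (x + e)) ^ 2) := by
    rw [show (fun x : G => 2 * (f x - f (x + e)) ^ 2 + 2 * (f (x + t) - f ((x + t) + e)) ^ 2)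
        = fun x : G => (2 * (f x - f (x + e)) ^ 2) + (2 * ((fun z => (f z - f (z + e)) ^ 2) (x + t))) from rfl]
    rw [expec_add, expec_const_mul, expec_const_mul, expec_shift (fun z => (f z - f (z + e)) ^ 2) t]
    ring
  unfold influence
  rw [← he]
  have := le_trans h1 (le_of_eq h2)
  linarith

lemma sup_influence_mul (hn : 0 < n) (f : G → ℝ) (hbd : ∀ x, |f x| ≤ 1) (t : G) :
    (⨆ i : Fin n, influence i (fun x => f x * f (x + t)))
      ≤ 4 * ⨆ i : Fin n, influence i f := by
  have hne : Nonempty (Fin n) := Fin.pos_iff_nonempty.mp hn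
  refine ciSup_le fun i => ?_
  refine le_trans (influence_mul_le f hbd t i) ?_
  have := le_ciSup (f := fun i : Fin n => influence i f) (Set.finite_range _).bddAbove i
  linarith

lemma main_ind (hn : 0 < n) (e : ℕ) :
    ∀ f : G → ℝ, (∀ x, |f x| ≤ 1) →
      gowersU (e + 1) f ≤ (expec f) ^ 2
        + ((4 : ℝ) ^ e - 1) / 3 * ⨆ i : Fin n, influence i f := by
  induction e with
  | zero =>
    intro f _
    rw [gowersU_one]
    norm_num
  | succ e ih =>
    intro f hbd
    have hne : Nonempty (Fin n) := Fin.pos_iff_nonempty.mp hn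
    set M : ℝ := ⨆ i : Fin n, influence i f with hM
    have hMnn : 0 ≤ M := by
      obtain ⟨i⟩ := hne
      exact le_trans (influence_nonneg i f)
        (le_ciSup (f := fun i : Fin n => influence i f) (Set.finite_range _).bddAbove i)
    have hc : (0 : ℝ) ≤ ((4 : ℝ) ^ e - 1) / 3 := by
      have h0 : (1 : ℝ) ^ e ≤ 4 ^ e := by gcongr <;> norm_num
      simp only [one_pow] at h0
      linarith
    have hgbd : ∀ t : G, ∀ x, |(fun x => f x * f (x + t)) x| ≤ 1 := by
      intro t x
      simp only [abs_mul]
      exact mul_le_one₀ (hbd x) (abs_nonneg _) (hbd _)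
    rw [gowersU_succ]
    have step1 : expec (fun t => gowersU (e + 1) fun x => f x * f (x + t))
        ≤ expec (fun t => (expec fun x => f x * f (x + t)) ^ 2
            + ((4 : ℝ) ^ e - 1) / 3 * (4 * M)) := by
      refine expec_mono fun t => ?_
      refine le_trans (ih _ (hgbd t)) ?_
      have h4 := sup_influence_mul hn f hbd t
      have := mul_le_mul_of_nonneg_left h4 hc
      linarith
    have step2 : expec (fun t => (expec fun x => f x * f (x + t)) ^ 2
          + ((4 : ℝ) ^ e - 1) / 3 * (4 * M))
        = expec (fun t => (expec fun x => f x * f (x + t)) ^ 2)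
          + ((4 : ℝ) ^ e - 1) / 3 * (4 * M) := by
      rw [expec_add]
      congr 1
      exact expec_const _
    have step3 : expec (fun t => (expec fun x => f x * f (x + t)) ^ 2)
        ≤ (expec f) ^ 2 + M := base_ineq hn f hbd
    have hcoef : 1 + ((4 : ℝ) ^ e - 1) / 3 * 4 = ((4 : ℝ) ^ (e + 1) - 1) / 3 := by
      rw [pow_succ]
      ring
    calc expec (fun t => gowersU (e + 1) fun x => f x * f (x + t))
        ≤ expec (fun t => (expec fun x => f x * f (x + t)) ^ 2)
          + ((4 : ℝ) ^ e - 1) / 3 * (4 * M) := by rw [← step2]; exact step1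
      _ ≤ (expec f) ^ 2 + M + ((4 : ℝ) ^ e - 1) / 3 * (4 * M) := by linarith
      _ = (expec f) ^ 2 + (1 + ((4 : ℝ) ^ e - 1) / 3 * 4) * M := by ring
      _ = (expec f) ^ 2 + ((4 : ℝ) ^ (e + 1) - 1) / 3 * M := by rw [hcoef]

end Aux

theorem gowersU_le_real (n d : ℕ) (hn : 0 < n) (hd : 1 ≤ d)
    (f : (Fin n → ZMod 2) → ℝ) (hbd : ∀ x, f x ∈ Set.Icc (-1 : ℝ) 1) :
    gowersU d f ≤ gowersU 1 f + (4 : ℝ) ^ d * ⨆ i : Fin n, influence i f := by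
  obtain ⟨e, rfl⟩ : ∃ e, d = e + 1 := ⟨d - 1, (Nat.succ_pred_eq_of_pos hd).symm⟩
  have hbd' : ∀ x, |f x| ≤ 1 := fun x => abs_le.mpr ⟨(hbd x).1, (hbd x).2⟩
  have h := main_ind hn e f hbd'
  rw [gowersU_one]
  have hne : Nonempty (Fin n) := Fin.pos_iff_nonempty.mp hn
  set M : ℝ := ⨆ i : Fin n, influence i f with hM
  have hMnn : 0 ≤ M := by
    obtain ⟨i⟩ := hne
    exact le_trans (influence_nonneg i f)
      (le_ciSup (f := fun i : Fin n => influence i f) (Set.finite_range _).bddAbove i)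
  have hcoef : ((4 : ℝ) ^ e - 1) / 3 ≤ (4 : ℝ) ^ (e + 1) := by
    have h1 : (4 : ℝ) ^ e ≤ 4 ^ (e + 1) := by
      rw [pow_succ]
      nlinarith [pow_pos (show (0:ℝ) < 4 by norm_num) e]
    have h2 : (0:ℝ) < 4 ^ (e + 1) := pow_pos (by norm_num) _
    linarith
  have := mul_le_mul_of_nonneg_right hcoef hMnn
  linarith
end

section
/- Let f_S : {0,1}^n → [-1,1] for S ⊆ [d], and define g_T := f_{T ∪ {d}} for T ⊆ [d]. Then |LU^d({f_S})| ≤ √(U^d-inner-product({g_T})), where LU^d({f_S}) := E_{x_1,...,x_d}[∏_{S⊆[d]} f_S(∑_{i∈S} x_i)] is the linear Gowers inner product and the Gowers inner product of {g_T} is E_{x,x_1,...,x_d}[∏_{T⊆[d]} g_T(x + ∑_{i∈T} x_i)]. -/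
open Finset

theorem linear_gowers_le_sqrt_gowers (n d : ℕ) (hd : 1 ≤ d)
    (f : Finset (Fin d) → (Fin n → ZMod 2) → ℝ)
    (hf : ∀ S x, f S x ∈ Set.Icc (-1 : ℝ) 1) :
    |(∑ y : Fin d → Fin n → ZMod 2,
        ∏ S : Finset (Fin d), f S (∑ i ∈ S, y i)) / (2 ^ n : ℝ) ^ d| ≤
      Real.sqrt ((∑ x : Fin n → ZMod 2, ∑ y : Fin d → Fin n → ZMod 2,
        ∏ T : Finset (Fin d),
          f (insert (⟨d - 1, by omega⟩ : Fin d) T) (x + ∑ i ∈ T, y i))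
        / (2 ^ n * (2 ^ n : ℝ) ^ d)) := by
  classical
  set k : Fin d := ⟨d - 1, by omega⟩ with hkdef
  set P : (Fin d → Fin n → ZMod 2) → ℝ :=
    fun y => ∏ S : Finset (Fin d), f S (∑ i ∈ S, y i) with hPdef
  set A : (Fin d → Fin n → ZMod 2) → ℝ :=
    fun y => ∏ S ∈ univ.filter (fun S : Finset (Fin d) => k ∉ S),
      f S (∑ i ∈ S, y i) with hAdef
  set B : (Fin d → Fin n → ZMod 2) → (Fin n → ZMod 2) → ℝ :=
    fun y v => ∏ S ∈ univ.filter (fun S : Finset (Fin d) => k ∈ S),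
      f S (v + ∑ i ∈ S.erase k, y i) with hBdef
  set D : (Fin d → Fin n → ZMod 2) → ℝ :=
    fun y => ∑ v : Fin n → ZMod 2, B y v with hDdef
  have cardV : ((Fintype.card (Fin n → ZMod 2) : ℕ) : ℝ) = (2 : ℝ) ^ n := by
    simp
  -- averaging lemma
  have lemA : ∀ g : (Fin d → Fin n → ZMod 2) → ℝ,
      (∑ y : Fin d → Fin n → ZMod 2, ∑ v : Fin n → ZMod 2, g (Function.update y k v))
        = (2 : ℝ) ^ n * ∑ y : Fin d → Fin n → ZMod 2, g y := by
    intro g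
    have hinv : Function.Involutive
        (fun p : (Fin d → Fin n → ZMod 2) × (Fin n → ZMod 2) =>
          (Function.update p.1 k p.2, p.1 k)) := by
      intro p
      simp [Function.update_idem]
    calc (∑ y : Fin d → Fin n → ZMod 2, ∑ v : Fin n → ZMod 2, g (Function.update y k v))
        = ∑ p : (Fin d → Fin n → ZMod 2) × (Fin n → ZMod 2),
            g (Function.update p.1 k p.2) :=
          (Fintype.sum_prod_type (fun p : (Fin d → Fin n → ZMod 2) × (Fin n → ZMod 2) =>
            g (Function.update p.1 k p.2))).symm
      _ = ∑ p : (Fin d → Fin n → ZMod 2) × (Fin n → ZMod 2), g p.1 :=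
          Fintype.sum_bijective _ hinv.bijective _ _ (fun p => rfl)
      _ = ∑ y : Fin d → Fin n → ZMod 2, ∑ _v : Fin n → ZMod 2, g y :=
          Fintype.sum_prod_type (fun p : (Fin d → Fin n → ZMod 2) × (Fin n → ZMod 2) => g p.1)
      _ = ∑ y : Fin d → Fin n → ZMod 2, ((Fintype.card (Fin n → ZMod 2) : ℕ) : ℝ) * g y := by
          simp [Finset.sum_const, card_univ]
      _ = (2 : ℝ) ^ n * ∑ y : Fin d → Fin n → ZMod 2, g y := by
          rw [← Finset.mul_sum, cardV]
  -- B ignores the k-th coordinate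
  have hBup : ∀ (y : Fin d → Fin n → ZMod 2) (v v' : Fin n → ZMod 2),
      B (Function.update y k v') v = B y v := by
    intro y v v'
    refine Finset.prod_congr rfl fun S _hS => ?_
    congr 2
    refine Finset.sum_congr rfl fun i hi => ?_
    exact Function.update_of_ne (Finset.ne_of_mem_erase hi) _ _
  -- P on an updated point splits as A * B
  have hP : ∀ (y : Fin d → Fin n → ZMod 2) (v : Fin n → ZMod 2),
      P (Function.update y k v) = A y * B y v := by
    intro y v
    rw [hPdef]
    simp only
    rw [← Finset.prod_filter_mul_prod_filter_not univ (fun S : Finset (Fin d) => k ∈ S)]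
    rw [mul_comm]
    congr 1
    · refine Finset.prod_congr rfl fun S hS => ?_
      have hk : k ∉ S := (Finset.mem_filter.1 hS).2
      congr 1
      refine Finset.sum_congr rfl fun i hi => ?_
      exact Function.update_of_ne (fun h => hk (by rwa [← h])) _ _
    · refine Finset.prod_congr rfl fun S hS => ?_
      have hk : k ∈ S := (Finset.mem_filter.1 hS).2
      congr 1
      rw [← Finset.add_sum_erase _ _ hk, Function.update_self]
      congr 1
      refine Finset.sum_congr rfl fun i hi => ?_
      exact Function.update_of_ne (Finset.ne_of_mem_erase hi) _ _
  -- |A| ≤ 1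
  have hA1 : ∀ y : Fin d → Fin n → ZMod 2, |A y| ≤ 1 := by
    intro y
    rw [hAdef]
    simp only
    rw [Finset.abs_prod]
    refine Finset.prod_le_one (fun S _ => abs_nonneg _) (fun S _ => ?_)
    exact abs_le.2 ⟨(hf S _).1, (hf S _).2⟩
  set L : ℝ := ∑ y : Fin d → Fin n → ZMod 2, P y with hLdef
  set G : ℝ := ∑ x : Fin n → ZMod 2, ∑ y : Fin d → Fin n → ZMod 2,
      ∏ T : Finset (Fin d), f (insert k T) (x + ∑ i ∈ T, y i) with hGdef
  -- step 1 : 2^n * L = ∑ y, A y * D y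
  have h1 : (2 : ℝ) ^ n * L = ∑ y : Fin d → Fin n → ZMod 2, A y * D y := by
    rw [hLdef, ← lemA P]
    refine Finset.sum_congr rfl fun y _ => ?_
    rw [hDdef]
    simp only
    rw [Finset.mul_sum]
    exact Finset.sum_congr rfl fun v _ => hP y v
  -- step 2 : G = ∑ x, ∑ y, B y x * B y (x + y k)
  have h2 : G = ∑ x : Fin n → ZMod 2, ∑ y : Fin d → Fin n → ZMod 2,
      B y x * B y (x + y k) := by
    rw [hGdef]
    refine Finset.sum_congr rfl fun x _ => Finset.sum_congr rfl fun y _ => ?_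
    rw [← Finset.prod_filter_mul_prod_filter_not univ (fun T : Finset (Fin d) => k ∈ T)]
    rw [mul_comm]
    congr 1
    · -- product over T with k ∉ T equals B y x
      rw [hBdef]
      simp only
      refine Finset.prod_nbij' (fun T => insert k T) (fun S => S.erase k) ?_ ?_ ?_ ?_ ?_
      · intro T hT
        simp only [Finset.mem_filter, Finset.mem_univ, true_and] at *
        exact Finset.mem_insert_self _ _
      · intro S hS
        simp only [Finset.mem_filter, Finset.mem_univ, true_and] at *
        exact Finset.notMem_erase _ _
      · intro T hT
        simp only [Finset.mem_filter, Finset.mem_univ, true_and] at hT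
        exact Finset.erase_insert hT
      · intro S hS
        simp only [Finset.mem_filter, Finset.mem_univ, true_and] at hS
        exact Finset.insert_erase hS
      · intro T hT
        simp only [Finset.mem_filter, Finset.mem_univ, true_and] at hT
        congr 1
        rw [Finset.erase_insert hT]
    · -- product over T with k ∈ T equals B y (x + y k)
      rw [hBdef]
      simp only
      refine Finset.prod_congr rfl fun T hT => ?_
      have hk : k ∈ T := (Finset.mem_filter.1 hT).2
      rw [Finset.insert_eq_self.2 hk]
      congr 1
      rw [← Finset.add_sum_erase _ y hk]
      abel
  -- step 3 : 2^n * G = ∑ y, (D y)^2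
  have h3 : (2 : ℝ) ^ n * G = ∑ y : Fin d → Fin n → ZMod 2, D y ^ 2 := by
    calc (2 : ℝ) ^ n * G
        = ∑ x : Fin n → ZMod 2, ((2 : ℝ) ^ n *
            ∑ y : Fin d → Fin n → ZMod 2, B y x * B y (x + y k)) := by
          rw [h2, Finset.mul_sum]
      _ = ∑ x : Fin n → ZMod 2, ∑ y : Fin d → Fin n → ZMod 2, ∑ v : Fin n → ZMod 2,
            B (Function.update y k v) x *
              B (Function.update y k v) (x + (Function.update y k v) k) := by
          exact Finset.sum_congr rfl fun x _ => (lemA _).symm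
      _ = ∑ x : Fin n → ZMod 2, ∑ y : Fin d → Fin n → ZMod 2, ∑ v : Fin n → ZMod 2,
            B y x * B y (x + v) := by
          refine Finset.sum_congr rfl fun x _ => Finset.sum_congr rfl fun y _ =>
            Finset.sum_congr rfl fun v _ => ?_
          rw [hBup, Function.update_self, hBup]
      _ = ∑ y : Fin d → Fin n → ZMod 2, ∑ x : Fin n → ZMod 2, ∑ v : Fin n → ZMod 2,
            B y x * B y (x + v) := Finset.sum_comm
      _ = ∑ y : Fin d → Fin n → ZMod 2, ∑ x : Fin n → ZMod 2, B y x * D y := by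
          refine Finset.sum_congr rfl fun y _ => Finset.sum_congr rfl fun x _ => ?_
          rw [← Finset.mul_sum]
          congr 1
          rw [hDdef]
          exact Fintype.sum_equiv (Equiv.addLeft x) _ _ (fun v => rfl)
      _ = ∑ y : Fin d → Fin n → ZMod 2, D y ^ 2 := by
          refine Finset.sum_congr rfl fun y _ => ?_
          rw [← Finset.sum_mul, hDdef, sq]
  -- Cauchy-Schwarz and conclusion
  have hM : (0 : ℝ) < (2 : ℝ) ^ n := by positivity
  have hN : (0 : ℝ) < ((2 : ℝ) ^ n) ^ d := by positivity
  have cardY : ((Fintype.card (Fin d → Fin n → ZMod 2) : ℕ) : ℝ) = ((2 : ℝ) ^ n) ^ d := by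
    have : Fintype.card (Fin d → Fin n → ZMod 2) = (2 ^ n) ^ d := by
      simp [Fintype.card_fun]
    rw [this]
    push_cast
    ring
  have hAsq : (∑ y : Fin d → Fin n → ZMod 2, A y ^ 2) ≤ ((2 : ℝ) ^ n) ^ d := by
    calc (∑ y : Fin d → Fin n → ZMod 2, A y ^ 2)
        ≤ ∑ _y : Fin d → Fin n → ZMod 2, (1 : ℝ) := by
          refine Finset.sum_le_sum fun y _ => ?_
          rw [← sq_abs]
          exact pow_le_one₀ (abs_nonneg _) (hA1 y)
      _ = ((2 : ℝ) ^ n) ^ d := by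
          rw [Finset.sum_const, card_univ, nsmul_eq_mul, mul_one, cardY]
  have hDsq : (0 : ℝ) ≤ ∑ y : Fin d → Fin n → ZMod 2, D y ^ 2 :=
    Finset.sum_nonneg fun y _ => sq_nonneg _
  have key : ((2 : ℝ) ^ n * L) ^ 2 ≤ ((2 : ℝ) ^ n) ^ d * ((2 : ℝ) ^ n * G) := by
    rw [h1, h3]
    calc (∑ y : Fin d → Fin n → ZMod 2, A y * D y) ^ 2
        ≤ (∑ y : Fin d → Fin n → ZMod 2, A y ^ 2) *
            ∑ y : Fin d → Fin n → ZMod 2, D y ^ 2 :=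
          Finset.sum_mul_sq_le_sq_mul_sq _ _ _
      _ ≤ ((2 : ℝ) ^ n) ^ d * ∑ y : Fin d → Fin n → ZMod 2, D y ^ 2 :=
          mul_le_mul_of_nonneg_right hAsq hDsq
  have hsq : (L / ((2 : ℝ) ^ n) ^ d) ^ 2 ≤ G / ((2 : ℝ) ^ n * ((2 : ℝ) ^ n) ^ d) := by
    rw [div_pow, div_le_div_iff₀ (by positivity) (by positivity)]
    nlinarith [key, hM, hN, sq_nonneg L, mul_pos hM hN]
  calc |L / ((2 : ℝ) ^ n) ^ d|
      = Real.sqrt ((L / ((2 : ℝ) ^ n) ^ d) ^ 2) := (Real.sqrt_sq_eq_abs _).symm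
    _ ≤ Real.sqrt (G / ((2 : ℝ) ^ n * ((2 : ℝ) ^ n) ^ d)) := Real.sqrt_le_sqrt hsq
end
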